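/- Let X be a quasiconvex metric space, Ω ⊆ X a bounded domain, f : Ω → [-∞,∞] and g : Ω → [0,∞] Borel. Then g is an upper gradient of f with respect to the metric space (Ω,d) if and only if g is an upper gradient of f with respect to the metric space Ω_M = (Ω,dM). Consequently, equipping both spaces with the measure μ|_Ω, one has N^{1,p}(Ω) = N^{1,p}(Ω_M) with equal norms for every 1 ≤ p < ∞. -/

import Mathlib

open Set MeasureTheory Filter ENNReal NNReal Metric Topology

noncomputable section

/-- Extended absolute value of the "difference" of two extended reals; with Mathlib's
`EReal` subtraction conventions, `erealAbs (a - b) = ∞` whenever both `a` and `b`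
are infinite, matching the convention for the upper gradient inequality. -/
def erealAbs (a : EReal) : ℝ≥0∞ :=
  if a = ⊤ ∨ a = ⊥ then ⊤ else ENNReal.ofReal |a.toReal|

/-- Variation of `γ` over `[a,b]` computed with respect to an arbitrary
distance-like function `ρ`, as a supremum over partitions
`a = t 0 ≤ t 1 ≤ ⋯ ≤ t n = b`. -/
def variationWith {Y : Type*} (ρ : Y → Y → ℝ≥0∞) (γ : ℝ → Y) (a b : ℝ) : ℝ≥0∞ :=
  ⨆ P ∈ {P : ℕ × (ℕ → ℝ) |
      Monotone P.2 ∧ (∀ i, P.2 i ∈ Set.Icc a b) ∧ P.2 0 = a ∧ P.2 P.1 = b},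
    ∑ i ∈ Finset.range P.1, ρ (γ (P.2 i)) (γ (P.2 (i + 1)))

/-- `γ : [0,L] → Y` is parameterized by arc length with respect to `ρ`. -/
def IsArcLengthParamWith {Y : Type*} (ρ : Y → Y → ℝ≥0∞) (γ : ℝ → Y) (L : ℝ) : Prop :=
  ∀ s t : ℝ, s ∈ Set.Icc 0 L → t ∈ Set.Icc 0 L → s ≤ t →
    variationWith ρ γ s t = ENNReal.ofReal (t - s)

/-- `g` is an upper gradient of `f` on `S` with respect to the distance `ρ`:
for every (nonconstant, compact, rectifiable) curve in `S` parameterized by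
arc length, the upper gradient inequality holds. -/
def IsUpperGradientWith {Y : Type*} (ρ : Y → Y → ℝ≥0∞) (S : Set Y)
    (g : Y → ℝ≥0∞) (f : Y → EReal) : Prop :=
  ∀ (γ : ℝ → Y) (L : ℝ), 0 < L → Set.MapsTo γ (Set.Icc 0 L) S →
    IsArcLengthParamWith ρ γ L →
    erealAbs (f (γ L) - f (γ 0)) ≤ ∫⁻ t in Set.Icc 0 L, g (γ t)

/-- Upper gradient on `S` with respect to the ambient metric. -/
def IsUpperGradientOn {Y : Type*} [PseudoEMetricSpace Y] (S : Set Y)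
    (g : Y → ℝ≥0∞) (f : Y → EReal) : Prop :=
  IsUpperGradientWith (fun x y => edist x y) S g f

/-- The `p`-th power of the Newtonian norm of `f` on `S` with respect to the
measure `m` and the distance `ρ`:
`∫_S |f|^p dm + inf {∫_S g^p dm : g a Borel upper gradient of f on S w.r.t. ρ}`. -/
def npEnergyWith {Y : Type*} [MeasurableSpace Y] (m : Measure Y) (p : ℝ)
    (ρ : Y → Y → ℝ≥0∞) (S : Set Y) (f : Y → ℝ) : ℝ≥0∞ :=
  (∫⁻ y in S, ENNReal.ofReal |f y| ^ p ∂m) +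
    ⨅ g ∈ {g : Y → ℝ≥0∞ | Measurable g ∧
        IsUpperGradientWith ρ S g (fun y => (f y : EReal))},
      ∫⁻ y in S, g y ^ p ∂m

/-- The `p`-th power of the Newtonian norm of `f` on `S ⊆ Y` (w.r.t. the ambient metric). -/
def npEnergyOn {Y : Type*} [PseudoEMetricSpace Y] [MeasurableSpace Y]
    (m : Measure Y) (p : ℝ) (S : Set Y) (f : Y → ℝ) : ℝ≥0∞ :=
  npEnergyWith m p (fun x y => edist x y) S f

/-- `f ∈ N^{1,p}(S, m)`. -/
def MemNp {Y : Type*} [PseudoEMetricSpace Y] [MeasurableSpace Y]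
    (m : Measure Y) (p : ℝ) (S : Set Y) (f : Y → ℝ) : Prop :=
  Measurable f ∧ npEnergyOn m p S f ≠ ⊤

/-- The Sobolev capacity `C_p(E; S)` of `E ⊆ S`. -/
def CpOn {Y : Type*} [PseudoEMetricSpace Y] [MeasurableSpace Y]
    (m : Measure Y) (p : ℝ) (S E : Set Y) : ℝ≥0∞ :=
  ⨅ u ∈ {u : Y → ℝ | MemNp m p S u ∧ ∀ x ∈ E, u x = 1}, npEnergyOn m p S u

/-- The capacity `bC_p(E; S)` of `E ⊆ closure S`. -/
def bCpOn {Y : Type*} [PseudoEMetricSpace Y] [MeasurableSpace Y]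
    (m : Measure Y) (p : ℝ) (S E : Set Y) : ℝ≥0∞ :=
  ⨅ u ∈ {u : Y → ℝ | MemNp m p S u ∧ (∀ x ∈ E ∩ S, 1 ≤ u x) ∧
      ∀ x ∈ E ∩ (closure S \ S),
        (1 : EReal) ≤ Filter.liminf (fun y => (u y : EReal)) (nhdsWithin x S)},
    npEnergyOn m p S u

/-- The Mazurkiewicz distance on `S`. -/
def mazDist {Y : Type*} [PseudoEMetricSpace Y] (S : Set Y) (x y : Y) : ℝ≥0∞ :=
  ⨅ E ∈ {E : Set Y | E ⊆ S ∧ IsConnected E ∧ x ∈ E ∧ y ∈ E}, EMetric.diam E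

/-- The inner metric on `S`: the infimum of lengths of curves in `S` joining
`x` and `y` (`∞` if there are none). -/
def innerDist {Y : Type*} [PseudoEMetricSpace Y] (S : Set Y) (x y : Y) : ℝ≥0∞ :=
  ⨅ c ∈ {c : (ℝ → Y) × ℝ × ℝ | c.2.1 ≤ c.2.2 ∧
      ContinuousOn c.1 (Set.Icc c.2.1 c.2.2) ∧
      Set.MapsTo c.1 (Set.Icc c.2.1 c.2.2) S ∧ c.1 c.2.1 = x ∧ c.1 c.2.2 = y},
    eVariationOn c.1 (Set.Icc c.2.1 c.2.2)

/-- `S` is `L`-quasiconvex: any two points of `S` can be joined by a curve in `S`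
of length at most `L` times their distance. -/
def LQuasiconvexOn {Y : Type*} [PseudoMetricSpace Y] (S : Set Y) (L : ℝ) : Prop :=
  ∀ x ∈ S, ∀ y ∈ S, ∃ (γ : ℝ → Y) (a b : ℝ), a ≤ b ∧
    ContinuousOn γ (Set.Icc a b) ∧ Set.MapsTo γ (Set.Icc a b) S ∧
    γ a = x ∧ γ b = y ∧ eVariationOn γ (Set.Icc a b) ≤ ENNReal.ofReal (L * dist x y)

/-- A quasiconvex metric space. -/
def QuasiconvexSpace (Y : Type*) [PseudoMetricSpace Y] : Prop :=
  ∃ L : ℝ, 1 ≤ L ∧ LQuasiconvexOn (Set.univ : Set Y) L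

/-- A bounded domain: a bounded nonempty open connected set. -/
def IsBoundedDomain {Y : Type*} [PseudoMetricSpace Y] (Ω : Set Y) : Prop :=
  IsOpen Ω ∧ IsConnected Ω ∧ Bornology.IsBounded Ω

/-- `Ω` is finitely connected at the boundary. -/
def FinConnAtBoundary {Y : Type*} [MetricSpace Y] (Ω : Set Y) : Prop :=
  ∀ x₀ ∈ frontier Ω, ∀ r : ℝ, 0 < r → ∃ G : Set Y, IsOpen G ∧ x₀ ∈ G ∧
    G ⊆ Metric.ball x₀ r ∧
    {C : Set Y | ∃ x ∈ G ∩ Ω, C = connectedComponentIn (G ∩ Ω) x}.Finite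

/-- The standing assumption on the measure: every ball has positive finite measure. -/
def BallRegular {Y : Type*} [PseudoMetricSpace Y] [MeasurableSpace Y]
    (m : Measure Y) : Prop :=
  ∀ (x : Y) (r : ℝ), 0 < r → 0 < m (Metric.ball x r) ∧ m (Metric.ball x r) < ⊤

/-- The measure `m` is (globally) doubling. -/
def DoublingMeasure' {Y : Type*} [PseudoMetricSpace Y] [MeasurableSpace Y]
    (m : Measure Y) : Prop :=
  ∃ C : ℝ≥0, 0 < C ∧ ∀ (x : Y) (r : ℝ), 0 < r →
    m (Metric.ball x (2 * r)) ≤ C * m (Metric.ball x r)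

/-- `(Y, m)` supports a `p`-Poincaré inequality. -/
def PoincareInequality {Y : Type*} [MetricSpace Y] [MeasurableSpace Y]
    (m : Measure Y) (p : ℝ) : Prop :=
  ∃ C lam : ℝ, 0 < C ∧ 1 ≤ lam ∧
    ∀ (x : Y) (r : ℝ), 0 < r → ∀ f : Y → ℝ, Integrable f m →
      ∀ g : Y → ℝ≥0∞, Measurable g →
        IsUpperGradientOn (Set.univ : Set Y) g (fun y => (f y : EReal)) →
        ENNReal.ofReal (⨍ y in Metric.ball x r,
            |f y - ⨍ z in Metric.ball x r, f z ∂m| ∂m) ≤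
          ENNReal.ofReal (C * Metric.diam (Metric.ball x r)) *
            ((∫⁻ y in Metric.ball x (lam * r), g y ^ p ∂m) /
              m (Metric.ball x (lam * r))) ^ (1 / p)

/-!
The Mazurkiewicz distance dominates `d`, and along a continuous curve
`dM(γ a, γ b) ≤ diam γ([a, b]) ≤ ℓ_d(γ|[a, b])`, since `γ([a, b])` is a connected subset of `Ω`
containing both endpoints. Summing over partitions, every curve in `Ω` has the same length for `d`
and for `dM`, so the two metrics have the same arc-length parametrized curves and hence the same
upper gradients; the Newtonian energies, built from the same measure, then coincide.
-/

def partitionsIcc (a b : ℝ) : Set (ℕ × (ℕ → ℝ)) :=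
  {P | Monotone P.2 ∧ (∀ i, P.2 i ∈ Icc a b) ∧ P.2 0 = a ∧ P.2 P.1 = b}

section Variation

variable {Y : Type*} {ρ : Y → Y → ℝ≥0∞} {γ : ℝ → Y} {a b : ℝ}

theorem sum_le_variationWith {P : ℕ × (ℕ → ℝ)} (hP : P ∈ partitionsIcc a b) :
    ∑ i ∈ Finset.range P.1, ρ (γ (P.2 i)) (γ (P.2 (i + 1))) ≤ variationWith ρ γ a b :=
  le_biSup (fun P : ℕ × (ℕ → ℝ) => ∑ i ∈ Finset.range P.1, ρ (γ (P.2 i)) (γ (P.2 (i + 1)))) hP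

theorem variationWith_mono {ρ' : Y → Y → ℝ≥0∞} (h : ∀ x y, ρ x y ≤ ρ' x y) :
    variationWith ρ γ a b ≤ variationWith ρ' γ a b :=
  iSup₂_le fun _ hP => (Finset.sum_le_sum fun _ _ => h _ _).trans (sum_le_variationWith hP)

theorem le_variationWith (hab : a ≤ b) : ρ (γ a) (γ b) ≤ variationWith ρ γ a b := by
  have hP : ((1, fun i => if i = 0 then a else b) : ℕ × (ℕ → ℝ)) ∈ partitionsIcc a b := by
    refine ⟨fun i j hij => ?_, fun i => ?_, by simp, by simp⟩ <;> grind
  simpa using sum_le_variationWith (ρ := ρ) (γ := γ) hP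

end Variation

section EMetric

variable {Y : Type*} [PseudoEMetricSpace Y] {γ : ℝ → Y} {a b : ℝ}

theorem variationWith_edist_eq_eVariationOn (hab : a ≤ b) :
    variationWith (fun x y => edist x y) γ a b = eVariationOn γ (Icc a b) := by
  apply le_antisymm
  · refine iSup₂_le fun P ⟨hmono, hmem, _, _⟩ => ?_
    calc ∑ i ∈ Finset.range P.1, edist (γ (P.2 i)) (γ (P.2 (i + 1)))
        = ∑ i ∈ Finset.range P.1, edist (γ (P.2 (i + 1))) (γ (P.2 i)) := by
          simp only [edist_comm]
      _ ≤ _ := eVariationOn.sum_le (f := γ) (n := P.1) hmono hmem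
  · refine iSup_le fun ⟨n, u, hu, hus⟩ => ?_
    -- prepend `a` and append `b` to the partition `u 0 ≤ ⋯ ≤ u n` of a subset of `[a, b]`
    let v : ℕ → ℝ := fun i => if i = 0 then a else if i ≤ n + 1 then u (i - 1) else b
    have hv : (n + 2, v) ∈ partitionsIcc a b := by
      refine ⟨monotone_nat_of_le_succ fun i => ?_, fun i => ?_, rfl, by simp [v]⟩
      · have := hus 0; have := hus n; have := hu i.le_succ; have := hu (i.sub_le 1); grind
      · have := hus (i - 1); grind
    calc ∑ i ∈ Finset.range n, edist (γ (u (i + 1))) (γ (u i))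
        = ∑ i ∈ Finset.range n, edist (γ (v (i + 1))) (γ (v (i + 1 + 1))) :=
          Finset.sum_congr rfl fun i hi => by
            simp only [Finset.mem_range] at hi
            simp only [v, if_neg (Nat.succ_ne_zero _), edist_comm]
            grind
      _ ≤ ∑ i ∈ Finset.range (n + 1), edist (γ (v (i + 1))) (γ (v (i + 1 + 1))) :=
          Finset.sum_le_sum_of_subset (Finset.range_subset_range.2 n.le_succ)
      _ ≤ ∑ i ∈ Finset.range (n + 2), edist (γ (v i)) (γ (v (i + 1))) := by
          rw [Finset.sum_range_succ' _ (n + 1)]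
          exact le_self_add
      _ ≤ _ := sum_le_variationWith hv

theorem edist_le_mazDist (S : Set Y) (x y : Y) : edist x y ≤ mazDist S x y :=
  le_iInf₂ fun _ hE => Metric.edist_le_ediam_of_mem hE.2.2.1 hE.2.2.2

theorem mazDist_le_eVariationOn {S : Set Y} (hab : a ≤ b) (hcont : ContinuousOn γ (Icc a b))
    (hmaps : MapsTo γ (Icc a b) S) : mazDist S (γ a) (γ b) ≤ eVariationOn γ (Icc a b) := by
  have hE : γ '' Icc a b ∈ {E : Set Y | E ⊆ S ∧ IsConnected E ∧ γ a ∈ E ∧ γ b ∈ E} :=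
    ⟨hmaps.image_subset, (isConnected_Icc hab).image γ hcont,
      mem_image_of_mem γ (left_mem_Icc.2 hab), mem_image_of_mem γ (right_mem_Icc.2 hab)⟩
  refine (iInf₂_le _ hE).trans (Metric.ediam_le ?_)
  rintro _ ⟨x, hx, rfl⟩ _ ⟨y, hy, rfl⟩
  exact eVariationOn.edist_le γ hx hy

theorem variationWith_mazDist_eq {S : Set Y} (hab : a ≤ b) (hcont : ContinuousOn γ (Icc a b))
    (hmaps : MapsTo γ (Icc a b) S) :
    variationWith (mazDist S) γ a b = variationWith (fun x y => edist x y) γ a b := by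
  refine le_antisymm (iSup₂_le fun P ⟨hmono, hmem, h0, hn⟩ => ?_)
    (variationWith_mono (edist_le_mazDist S))
  have hsub : ∀ i, Icc (P.2 i) (P.2 (i + 1)) ⊆ Icc a b := fun i =>
    Icc_subset_Icc (hmem i).1 (hmem (i + 1)).2
  calc ∑ i ∈ Finset.range P.1, mazDist S (γ (P.2 i)) (γ (P.2 (i + 1)))
      ≤ ∑ i ∈ Finset.range P.1, eVariationOn γ (Icc (P.2 i) (P.2 (i + 1))) :=
        Finset.sum_le_sum fun i _ => mazDist_le_eVariationOn (hmono i.le_succ)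
          (hcont.mono (hsub i)) (hmaps.mono_left (hsub i))
    _ = eVariationOn γ (Icc a b) := by rw [eVariationOn.sum' γ hmono, h0, hn]
    _ = _ := (variationWith_edist_eq_eVariationOn hab).symm

theorem IsArcLengthParamWith.continuousOn {ρ : Y → Y → ℝ≥0∞} {L : ℝ}
    (hρ : ∀ x y, edist x y ≤ ρ x y) (h : IsArcLengthParamWith ρ γ L) :
    ContinuousOn γ (Icc 0 L) := by
  have hle : ∀ s ∈ Icc 0 L, ∀ t ∈ Icc 0 L, s ≤ t → edist (γ s) (γ t) ≤ edist s t := by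
    intro s hs t ht hst
    calc edist (γ s) (γ t) ≤ variationWith ρ γ s t := (hρ _ _).trans (le_variationWith hst)
      _ = ENNReal.ofReal (t - s) := h s t hs ht hst
      _ = edist s t := by rw [edist_comm, edist_dist, Real.dist_eq, abs_of_nonneg (by linarith)]
  refine LipschitzOnWith.continuousOn (K := 1) fun s hs t ht => ?_
  rw [ENNReal.coe_one, one_mul]
  rcases le_total s t with hst | hts
  · exact hle s hs t ht hst
  · rw [edist_comm, edist_comm s]
    exact hle t ht s hs hts

theorem isArcLengthParamWith_mazDist_iff {S : Set Y} {L : ℝ} (hmaps : MapsTo γ (Icc 0 L) S) :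
    IsArcLengthParamWith (mazDist S) γ L ↔ IsArcLengthParamWith (fun x y => edist x y) γ L := by
  have key (hcont : ContinuousOn γ (Icc 0 L)) :
      IsArcLengthParamWith (mazDist S) γ L ↔ IsArcLengthParamWith (fun x y => edist x y) γ L :=
    forall₄_congr fun s t hs ht => imp_congr_right fun hst => by
      have hsub : Icc s t ⊆ Icc 0 L := Icc_subset_Icc hs.1 ht.2
      rw [variationWith_mazDist_eq hst (hcont.mono hsub) (hmaps.mono_left hsub)]
  exact ⟨fun h => (key (h.continuousOn (edist_le_mazDist S))).1 h,
    fun h => (key (h.continuousOn fun _ _ => le_rfl)).2 h⟩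

theorem isUpperGradientOn_iff_mazDist (S : Set Y) (g : Y → ℝ≥0∞) (f : Y → EReal) :
    IsUpperGradientOn S g f ↔ IsUpperGradientWith (mazDist S) S g f :=
  forall₄_congr fun _ _ _ hmaps => imp_congr_left (isArcLengthParamWith_mazDist_iff hmaps).symm

theorem npEnergyOn_eq_npEnergyWith_mazDist [MeasurableSpace Y] (m : Measure Y) (p : ℝ)
    (S : Set Y) (u : Y → ℝ) : npEnergyOn m p S u = npEnergyWith m p (mazDist S) S u := by
  simp only [npEnergyOn, npEnergyWith, ← isUpperGradientOn_iff_mazDist]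
  rfl

end EMetric

theorem statement3_general {X : Type*} [MetricSpace X] [MeasurableSpace X]
    (μ : Measure X) (Ω : Set X)
    (f : X → EReal) (g : X → ℝ≥0∞) :
    (IsUpperGradientOn Ω g f ↔ IsUpperGradientWith (mazDist Ω) Ω g f) ∧
    ∀ p : ℝ, 1 ≤ p → ∀ u : X → ℝ,
      npEnergyOn μ p Ω u = npEnergyWith μ p (mazDist Ω) Ω u :=
  ⟨isUpperGradientOn_iff_mazDist Ω g f, fun p _ u => npEnergyOn_eq_npEnergyWith_mazDist μ p Ω u⟩

theorem statement3 {X : Type*} [MetricSpace X] [MeasurableSpace X] [BorelSpace X]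
    (μ : Measure X) (hμc : μ.IsComplete) (hball : BallRegular μ)
    (hX : QuasiconvexSpace X) (Ω : Set X) (hΩ : IsBoundedDomain Ω)
    (f : X → EReal) (hf : Measurable f) (g : X → ℝ≥0∞) (hg : Measurable g) :
    (IsUpperGradientOn Ω g f ↔ IsUpperGradientWith (mazDist Ω) Ω g f) ∧
    ∀ p : ℝ, 1 ≤ p → ∀ u : X → ℝ,
      npEnergyOn μ p Ω u = npEnergyWith μ p (mazDist Ω) Ω u :=
  statement3_general μ Ω f g

end
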